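/- arXiv:2011.12732 — 2 statements merged into one kernel-verified Lean document; each statement's English description precedes it below -/
import Mathlib

section
/- Let β, γ > 0 be real constants with γ ≠ 1. Set r = |γ−1|/(γ+1), and for each integer n let n_γ = n if γ > 1 and n_γ = n − 1/2 if 0 < γ < 1, and put μₙ = (1/2)·ln r + n_γ π i. Then there exist a natural number N and a constant C > 0 such that for every integer n with |n| ≥ N there exists λₙ ∈ ℂ, λₙ ≠ 0, satisfying λₙ cosh λₙ + (γλₙ + β) sinh λₙ = 0 and |λₙ − μₙ| ≤ C/|n|. -/
/-- `n_γ = n` if `γ > 1` and `n - 1/2` if `0 < γ < 1`. -/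
noncomputable def ngamma (γ : ℝ) (n : ℤ) : ℝ := if 1 < γ then (n : ℝ) else (n : ℝ) - 1 / 2

/-- `μₙ = (1/2)·ln(|γ-1|/(γ+1)) + n_γ π i`. -/
noncomputable def muSeq (γ : ℝ) (n : ℤ) : ℂ :=
  (Real.log (|γ - 1| / (γ + 1)) / 2 : ℝ) + (ngamma γ n * Real.pi : ℝ) * Complex.I

/-!
With `a = β / (γ - 1)` and `b = β / (γ + 1)` the characteristic equation reads
`exp (2λ) (γ + 1) (λ + b) = (γ - 1) (λ + a)`, and since `exp (2 μₙ) = (γ - 1) / (γ + 1)` its roots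
near `μₙ` are the fixed points of `λ ↦ μₙ + log ((λ + a) / (λ + b)) / 2`. On the closed unit disc
around `μₙ` we have `‖λ + b‖ ≥ |Im λ| ≥ |n|` because `b` is real, so for large `|n|` this map is a
contraction of the disc that moves every point by at most `‖a - b‖ / |n|`. Banach's fixed point
theorem yields the root `λₙ`.
-/

open Complex Metric Set

theorem Complex.norm_log_sub_log_le {u v : ℂ} (hu : u ∈ closedBall 1 (1 / 2))
    (hv : v ∈ closedBall 1 (1 / 2)) : ‖log u - log v‖ ≤ 2 * ‖u - v‖ := by
  have hre : ∀ z ∈ closedBall (1 : ℂ) (1 / 2), 1 / 2 ≤ ‖z‖ ∧ 0 < z.re := by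
    intro z hz
    rw [mem_closedBall, dist_eq_norm] at hz
    have h1 := norm_sub_norm_le 1 z
    have h2 := abs_le.mp ((abs_re_le_norm (z - 1)).trans hz)
    rw [norm_one, norm_sub_rev] at h1
    simp only [sub_re, one_re] at h2
    constructor <;> linarith
  refine Convex.norm_image_sub_le_of_norm_hasDerivWithin_le (f' := fun z ↦ z⁻¹)
    (fun z hz ↦ (hasDerivAt_log (mem_slitPlane_iff.mpr (Or.inl (hre z hz).2))).hasDerivWithinAt)
    (fun z hz ↦ ?_) (convex_closedBall _ _) hv hu
  rw [norm_inv, inv_le_comm₀ (by linarith [(hre z hz).1]) two_pos, ← one_div]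
  exact (hre z hz).1

/-- Fixed points of this map solve `exp (2 * (z - μ)) = (z + a) / (z + b)`. -/
noncomputable def halfLogMap (μ a b z : ℂ) : ℂ := μ + log ((z + a) / (z + b)) / 2

section HalfLogMap

variable {μ a b x y z : ℂ} {R : ℝ}

theorem norm_div_add_sub_one_le (hR : 0 < R) (hz : R ≤ ‖z + b‖) :
    ‖(z + a) / (z + b) - 1‖ ≤ ‖a - b‖ / R := by
  have hzb : z + b ≠ 0 := norm_pos_iff.mp (hR.trans_le hz)
  rw [div_sub_one hzb, add_sub_add_left_eq_sub, norm_div]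
  gcongr

theorem div_add_mem_closedBall_one (hR : 0 < R) (hab : 2 * ‖a - b‖ ≤ R) (hz : R ≤ ‖z + b‖) :
    (z + a) / (z + b) ∈ closedBall 1 (1 / 2) := by
  rw [mem_closedBall, dist_eq_norm]
  refine (norm_div_add_sub_one_le hR hz).trans ?_
  rw [div_le_iff₀ hR]
  linarith

theorem norm_halfLogMap_sub_le (hR : 0 < R) (hab : 2 * ‖a - b‖ ≤ R) (hz : R ≤ ‖z + b‖) :
    ‖halfLogMap μ a b z - μ‖ ≤ ‖a - b‖ / R := by
  have hlog := norm_log_sub_log_le (div_add_mem_closedBall_one hR hab hz)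
    (mem_closedBall_self (by norm_num : (0 : ℝ) ≤ 1 / 2))
  rw [log_one, sub_zero] at hlog
  rw [halfLogMap, add_sub_cancel_left, norm_div, Complex.norm_two]
  linarith [norm_div_add_sub_one_le (a := a) hR hz]

theorem dist_halfLogMap_le (hR : 1 ≤ R) (hab : 2 * ‖a - b‖ ≤ R) (hx : R ≤ ‖x + b‖)
    (hy : R ≤ ‖y + b‖) : dist (halfLogMap μ a b x) (halfLogMap μ a b y) ≤ 1 / 2 * dist x y := by
  have hR0 : 0 < R := one_pos.trans_le hR
  have hxb : x + b ≠ 0 := norm_pos_iff.mp (hR0.trans_le hx)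
  have hyb : y + b ≠ 0 := norm_pos_iff.mp (hR0.trans_le hy)
  have hlog := norm_log_sub_log_le (div_add_mem_closedBall_one hR0 hab hx)
    (div_add_mem_closedBall_one hR0 hab hy)
  have hdiff : (x + a) / (x + b) - (y + a) / (y + b) = (b - a) * (x - y) / ((x + b) * (y + b)) := by
    field_simp
    ring
  have hmob : ‖(x + a) / (x + b) - (y + a) / (y + b)‖ ≤ ‖a - b‖ * dist x y / (R * R) := by
    rw [hdiff, norm_div, norm_mul, norm_mul, dist_eq_norm, norm_sub_rev b]
    gcongr
  have hcontr : ‖a - b‖ * dist x y / (R * R) ≤ 1 / 2 * dist x y := by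
    rw [div_le_iff₀ (by positivity)]
    have hd := dist_nonneg (x := x) (y := y)
    nlinarith [mul_le_mul_of_nonneg_right hab hd, mul_le_mul_of_nonneg_left hR hd]
  rw [dist_eq_norm, halfLogMap, halfLogMap, add_sub_add_left_eq_sub, ← sub_div, norm_div,
    Complex.norm_two]
  linarith

theorem exists_exp_two_mul_sub_mul_add_eq (hR : 1 ≤ R) (hab : 2 * ‖a - b‖ ≤ R)
    (hb : ∀ z ∈ closedBall μ 1, R ≤ ‖z + b‖) :
    ∃ l ∈ closedBall μ 1, exp (2 * (l - μ)) * (l + b) = l + a ∧ ‖l - μ‖ ≤ ‖a - b‖ / R := by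
  have hR0 : 0 < R := one_pos.trans_le hR
  have hmaps : MapsTo (halfLogMap μ a b) (closedBall μ 1) (closedBall μ 1) := by
    intro z hz
    rw [mem_closedBall, dist_eq_norm]
    refine (norm_halfLogMap_sub_le hR0 hab (hb z hz)).trans ?_
    rw [div_le_iff₀ hR0]
    linarith
  have hlip : LipschitzOnWith (1 / 2) (halfLogMap μ a b) (closedBall μ 1) :=
    LipschitzOnWith.of_dist_le_mul fun x hx y hy ↦ by
      simpa using dist_halfLogMap_le hR hab (hb x hx) (hb y hy)
  have hcontr : ContractingWith (1 / 2) (hmaps.restrict _ _ _) :=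
    ⟨by rw [← NNReal.coe_lt_coe]; norm_num, hlip.to_restrict⟩
  obtain ⟨l, hl, hfix, -⟩ := hcontr.exists_fixedPoint' isClosed_closedBall.isComplete hmaps
    (mem_closedBall_self zero_le_one) (edist_ne_top _ _)
  have hu := div_add_mem_closedBall_one (a := a) hR0 hab (hb l hl)
  have hu0 : (l + a) / (l + b) ≠ 0 := by
    rintro h
    rw [h, mem_closedBall, dist_zero_left, norm_one] at hu
    norm_num at hu
  have hlb : l + b ≠ 0 := norm_pos_iff.mp (hR0.trans_le (hb l hl))
  have hlog : log ((l + a) / (l + b)) = 2 * (l - μ) := by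
    have : halfLogMap μ a b l = l := hfix
    rw [halfLogMap] at this
    linear_combination 2 * this
  refine ⟨l, hl, ?_, ?_⟩
  · rw [← hlog, exp_log hu0, div_mul_cancel₀ _ hlb]
  · rw [← hfix.eq]
    exact norm_halfLogMap_sub_le hR0 hab (hb l hl)

end HalfLogMap

theorem Complex.mul_cosh_add_mul_sinh_eq_zero_iff (l γ β : ℂ) :
    l * cosh l + (γ * l + β) * sinh l = 0 ↔
      exp (2 * l) * ((γ + 1) * l + β) = (γ - 1) * l + β := by
  have hexp : exp (2 * l) = exp l * exp l := by rw [two_mul, exp_add]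
  have hfactor : l * cosh l + (γ * l + β) * sinh l =
      exp (-l) / 2 * (exp (2 * l) * ((γ + 1) * l + β) - ((γ - 1) * l + β)) := by
    rw [cosh, sinh, hexp, exp_neg]
    field_simp
    ring
  rw [hfactor, mul_eq_zero, sub_eq_zero, or_iff_right (div_ne_zero (exp_ne_zero _) two_ne_zero)]

theorem exp_two_mul_muSeq {γ : ℝ} (hγ : 0 < γ) (hγ1 : γ ≠ 1) (n : ℤ) :
    exp (2 * muSeq γ n) = (γ - 1) / (γ + 1) := by
  have hr : 0 < |γ - 1| / (γ + 1) := div_pos (abs_pos.mpr (sub_ne_zero.mpr hγ1)) (by linarith)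
  have hsplit : 2 * muSeq γ n = Real.log (|γ - 1| / (γ + 1)) + 2 * ngamma γ n * Real.pi * I := by
    rw [muSeq]
    push_cast
    ring
  have hγc : (γ : ℂ) + 1 ≠ 0 := by exact_mod_cast (show γ + 1 ≠ 0 by linarith)
  rw [hsplit, exp_add, ← ofReal_exp, Real.exp_log hr, ngamma]
  split_ifs with h
  · rw [show 2 * ((n : ℝ) : ℂ) * Real.pi * I = n * (2 * Real.pi * I) by push_cast; ring,
      exp_int_mul_two_pi_mul_I, abs_of_pos (sub_pos.mpr h)]
    push_cast
    ring
  · have hhalf : 2 * ((n : ℝ) - 1 / 2 : ℝ) * Real.pi * I = n * (2 * Real.pi * I) - Real.pi * I := by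
      push_cast
      ring
    rw [hhalf, exp_sub, exp_int_mul_two_pi_mul_I, exp_pi_mul_I,
      abs_of_neg (sub_neg.mpr (lt_of_le_of_ne (not_lt.mp h) hγ1))]
    push_cast
    field_simp

theorem abs_sub_half_le_abs_ngamma (γ : ℝ) (n : ℤ) : |(n : ℝ)| - 1 / 2 ≤ |ngamma γ n| := by
  rw [ngamma]
  split_ifs
  · linarith
  · linarith [abs_sub_abs_le_abs_sub (n : ℝ) (1 / 2), abs_of_pos (one_half_pos (α := ℝ))]

theorem abs_le_abs_im_of_mem_closedBall_muSeq {γ : ℝ} {n : ℤ} {z : ℂ} (hn : 2 ≤ |(n : ℝ)|)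
    (hz : z ∈ closedBall (muSeq γ n) 1) : |(n : ℝ)| ≤ |z.im| := by
  rw [mem_closedBall, dist_eq_norm] at hz
  have him : (muSeq γ n).im = ngamma γ n * Real.pi := by simp [muSeq]
  have hdist : |(muSeq γ n).im| - |z.im| ≤ 1 := by
    have := abs_im_le_norm (z - muSeq γ n)
    rw [sub_im, abs_sub_comm] at this
    linarith [abs_sub_abs_le_abs_sub (muSeq γ n).im z.im]
  have hμ : (|(n : ℝ)| - 1 / 2) * Real.pi ≤ |(muSeq γ n).im| := by
    rw [him, abs_mul, abs_of_pos Real.pi_pos]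
    exact mul_le_mul_of_nonneg_right (abs_sub_half_le_abs_ngamma γ n) Real.pi_pos.le
  nlinarith [Real.pi_gt_three]

/-- for all large `|n|` the characteristic equation
`λ cosh λ + (γλ+β) sinh λ = 0` has a nonzero root `λₙ` with `|λₙ - μₙ| ≤ C/|n|`. -/
theorem stmt10 (β γ : ℝ) (hβ : 0 < β) (hγ : 0 < γ) (hγ1 : γ ≠ 1) :
    ∃ (N : ℕ) (C : ℝ), 0 < C ∧
      ∀ n : ℤ, (N : ℤ) ≤ |n| →
        ∃ l : ℂ, l ≠ 0 ∧
          l * Complex.cosh l + (γ * l + β) * Complex.sinh l = 0 ∧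
          ‖l - muSeq γ n‖ ≤ C / |(n : ℝ)| := by
  have hγm : γ - 1 ≠ 0 := sub_ne_zero.mpr hγ1
  have hγp : γ + 1 ≠ 0 := by positivity
  set a : ℝ := β / (γ - 1)
  set b : ℝ := β / (γ + 1)
  have hC : 0 < ‖(a : ℂ) - b‖ := by
    rw [← ofReal_sub, norm_pos_iff, ofReal_ne_zero, sub_ne_zero, Ne, div_eq_div_iff hγm hγp]
    intro h
    linarith [show β * 2 = 0 by linear_combination h]
  refine ⟨⌈2 * ‖(a : ℂ) - b‖⌉₊ + 2, _, hC, fun n hn ↦ ?_⟩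
  have hn : (⌈2 * ‖(a : ℂ) - b‖⌉₊ + 2 : ℝ) ≤ |(n : ℝ)| := by exact_mod_cast hn
  have hceil := Nat.le_ceil (2 * ‖(a : ℂ) - b‖)
  have hn2 : 2 ≤ |(n : ℝ)| := by linarith
  obtain ⟨l, hl, hexp, hdist⟩ := exists_exp_two_mul_sub_mul_add_eq (μ := muSeq γ n)
    (by linarith) (by linarith) fun z hz ↦
      (abs_le_abs_im_of_mem_closedBall_muSeq hn2 hz).trans (by simpa using abs_im_le_norm (z + b))
  have hlim := abs_le_abs_im_of_mem_closedBall_muSeq hn2 hl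
  refine ⟨l, fun h ↦ ?_, (mul_cosh_add_mul_sinh_eq_zero_iff l γ β).mpr ?_, hdist⟩
  · rw [h, zero_im, abs_zero] at hlim
    linarith
  rw [show 2 * l = 2 * (l - muSeq γ n) + 2 * muSeq γ n by ring, exp_add,
    exp_two_mul_muSeq hγ hγ1]
  have hγc : (γ : ℂ) + 1 ≠ 0 := by exact_mod_cast hγp
  have hγc' : (γ : ℂ) - 1 ≠ 0 := by exact_mod_cast hγm
  push_cast [a, b] at hexp
  field_simp at hexp ⊢
  linear_combination hexp
end

section
/- Let β, γ > 0 be real constants with γ ≠ 1. Set r = |γ−1|/(γ+1), n_γ = n if γ > 1 and n_γ = n − 1/2 if 0 < γ < 1, and μₙ = (1/2)·ln r + n_γ π i. Suppose (λₙ)_{n ∈ ℤ} is a sequence of nonzero complex numbers and C₀ > 0 is such that |λₙ − μₙ| ≤ C₀/|n| for all n ≠ 0. Define fₙ(x) = sinh(λₙ(x−1)). Then there exist C > 0 and N ∈ ℕ such that for all integers n with |n| ≥ N and all x ∈ [0,1]: |2 fₙ'(x)/λₙ − (r^{(x−1)/2} e^{i n_γ π (x−1)} + r^{−(x−1)/2}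 e^{−i n_γ π (x−1)})| ≤ C/|n| and |2 fₙ(x) − (r^{(x−1)/2} e^{i n_γ π (x−1)} − r^{−(x−1)/2} e^{−i n_γ π (x−1)})| ≤ C/|n|. -/
/-! Writing `t = x - 1` and `r = |γ-1|/(γ+1)`, the comparison functions are exactly
`2 cosh(μₙ t)` and `2 sinh(μₙ t)`, while `2 fₙ'(x)/λₙ = 2 cosh(λₙ t)` and `2 fₙ(x) = 2 sinh(λₙ t)`.
Since `|t| ≤ 1` and `Re μₙ = (ln r)/2` does not depend on `n`, the estimate
`|e^z - e^w| ≤ 2 e^{Re w} |z - w|` for `|z - w| ≤ 1` turns `|λₙ - μₙ| ≤ C₀/|n|` into an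
`O(1/|n|)` bound, uniformly in `x`, as soon as `C₀/|n| ≤ 1`. -/

/-- The eigenfunction `f_λ(x) = sinh(λ(x-1))`. -/
noncomputable def efun (l : ℂ) : ℝ → ℂ := fun x => Complex.sinh (l * (x - 1))

open Complex

lemma norm_exp_sub_exp_le {a b : ℂ} (h : ‖a - b‖ ≤ 1) :
    ‖exp a - exp b‖ ≤ Real.exp b.re * (2 * ‖a - b‖) := by
  have : exp a - exp b = exp b * (exp (a - b) - 1) := by
    rw [mul_sub, mul_one, ← exp_add, add_sub_cancel]
  rw [this, norm_mul, norm_exp]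
  exact mul_le_mul_of_nonneg_left (norm_exp_sub_one_le h) (Real.exp_nonneg _)

section Perturbation

variable {a b : ℂ} {t ε : ℝ}

lemma norm_exp_mul_sub_exp_mul_le (ht : |t| ≤ 1) (hab : ‖a - b‖ ≤ ε) (hε : ε ≤ 1) :
    ‖exp (a * t) - exp (b * t)‖ ≤ 2 * Real.exp |b.re| * ε := by
  have hdiff : ‖a * t - b * t‖ ≤ ε := by
    rw [← sub_mul, norm_mul, norm_real, Real.norm_eq_abs]
    nlinarith [norm_nonneg (a - b), abs_nonneg t]
  have hre : Real.exp (b * t).re ≤ Real.exp |b.re| := by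
    rw [re_mul_ofReal, Real.exp_le_exp]
    calc b.re * t ≤ |b.re| * |t| := by rw [← abs_mul]; exact le_abs_self _
      _ ≤ |b.re| := mul_le_of_le_one_right (abs_nonneg _) ht
  calc ‖exp (a * t) - exp (b * t)‖ ≤ Real.exp (b * t).re * (2 * ‖a * t - b * t‖) :=
        norm_exp_sub_exp_le (hdiff.trans hε)
    _ ≤ Real.exp |b.re| * (2 * ε) := by gcongr
    _ = 2 * Real.exp |b.re| * ε := by ring

lemma norm_cosh_mul_sub_cosh_mul_le (ht : |t| ≤ 1) (hab : ‖a - b‖ ≤ ε) (hε : ε ≤ 1) :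
    ‖cosh (a * t) - cosh (b * t)‖ ≤ 2 * Real.exp |b.re| * ε := by
  have hneg : ‖-a - -b‖ ≤ ε := by rwa [neg_sub_neg, norm_sub_rev]
  have hpos := norm_exp_mul_sub_exp_mul_le ht hab hε
  have hneg := norm_exp_mul_sub_exp_mul_le ht hneg hε
  rw [neg_re, abs_neg, neg_mul, neg_mul] at hneg
  have : cosh (a * t) - cosh (b * t)
      = ((exp (a * t) - exp (b * t)) + (exp (-(a * t)) - exp (-(b * t)))) / 2 := by
    rw [cosh, cosh]; ring
  rw [this, norm_div, RCLike.norm_ofNat]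
  linarith [norm_add_le (exp (a * t) - exp (b * t)) (exp (-(a * t)) - exp (-(b * t)))]

lemma norm_sinh_mul_sub_sinh_mul_le (ht : |t| ≤ 1) (hab : ‖a - b‖ ≤ ε) (hε : ε ≤ 1) :
    ‖sinh (a * t) - sinh (b * t)‖ ≤ 2 * Real.exp |b.re| * ε := by
  have hneg : ‖-a - -b‖ ≤ ε := by rwa [neg_sub_neg, norm_sub_rev]
  have hpos := norm_exp_mul_sub_exp_mul_le ht hab hε
  have hneg := norm_exp_mul_sub_exp_mul_le ht hneg hε
  rw [neg_re, abs_neg, neg_mul, neg_mul] at hneg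
  have : sinh (a * t) - sinh (b * t)
      = ((exp (a * t) - exp (b * t)) - (exp (-(a * t)) - exp (-(b * t)))) / 2 := by
    rw [sinh, sinh]; ring
  rw [this, norm_div, RCLike.norm_ofNat]
  linarith [norm_sub_le (exp (a * t) - exp (b * t)) (exp (-(a * t)) - exp (-(b * t)))]

end Perturbation

lemma hasDerivAt_efun (l : ℂ) (x : ℝ) : HasDerivAt (efun l) (l * cosh (l * (x - 1))) x := by
  have h := (((hasDerivAt_id (x : ℂ)).sub_const 1).const_mul l).csinh
  rw [mul_one, mul_comm] at h
  exact h.comp_ofReal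

lemma two_mul_deriv_efun_div {l : ℂ} (hl : l ≠ 0) (x : ℝ) :
    2 * deriv (efun l) x / l = 2 * cosh (l * (x - 1)) := by
  rw [(hasDerivAt_efun l x).deriv]
  field_simp

section Spectrum

variable {γ : ℝ}

lemma abs_sub_one_div_add_one_pos (hγ : 0 < γ) (hγ1 : γ ≠ 1) : 0 < |γ - 1| / (γ + 1) :=
  div_pos (abs_pos.2 (sub_ne_zero.2 hγ1)) (by linarith)

lemma muSeq_re (n : ℤ) : (muSeq γ n).re = Real.log (|γ - 1| / (γ + 1)) / 2 := by
  simp [muSeq]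

lemma exp_muSeq_mul (hγ : 0 < γ) (hγ1 : γ ≠ 1) (n : ℤ) (x : ℝ) :
    exp (muSeq γ n * (x - 1)) = ((|γ - 1| / (γ + 1)) ^ ((x - 1) / 2) : ℝ)
      * exp (I * (ngamma γ n * Real.pi * (x - 1))) := by
  rw [Real.rpow_def_of_pos (abs_sub_one_div_add_one_pos hγ hγ1), ofReal_exp, ← exp_add, muSeq]
  push_cast
  ring_nf

lemma exp_neg_muSeq_mul (hγ : 0 < γ) (hγ1 : γ ≠ 1) (n : ℤ) (x : ℝ) :
    exp (-(muSeq γ n * (x - 1))) = ((|γ - 1| / (γ + 1)) ^ (-((x - 1) / 2)) : ℝ)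
      * exp (-(I * (ngamma γ n * Real.pi * (x - 1)))) := by
  rw [Real.rpow_def_of_pos (abs_sub_one_div_add_one_pos hγ hγ1), ofReal_exp, ← exp_add, muSeq]
  push_cast
  ring_nf

end Spectrum

theorem stmt11_general (γ : ℝ) (hγ : 0 < γ) (hγ1 : γ ≠ 1)
    (l : ℤ → ℂ) (hl : ∀ n, l n ≠ 0) (C₀ : ℝ) (hC₀ : 0 < C₀)
    (hasymp : ∀ n : ℤ, n ≠ 0 → Norm.norm (l n - muSeq γ n) ≤ C₀ / |(n : ℝ)|) :
    ∃ (C : ℝ), 0 < C ∧ ∃ N : ℕ, ∀ n : ℤ, (N : ℤ) ≤ |n| → ∀ x ∈ Set.Icc (0:ℝ) 1,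
      Norm.norm (2 * deriv (efun (l n)) x / l n
          - (((|γ - 1| / (γ + 1)) ^ ((x - 1) / 2) : ℝ)
              * Complex.exp (Complex.I * (ngamma γ n * Real.pi * (x - 1)))
            + ((|γ - 1| / (γ + 1)) ^ (-((x - 1) / 2)) : ℝ)
              * Complex.exp (-(Complex.I * (ngamma γ n * Real.pi * (x - 1)))))) ≤ C / |(n : ℝ)| ∧
      Norm.norm (2 * efun (l n) x
          - (((|γ - 1| / (γ + 1)) ^ ((x - 1) / 2) : ℝ)
              * Complex.exp (Complex.I * (ngamma γ n * Real.pi * (x - 1)))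
            - ((|γ - 1| / (γ + 1)) ^ (-((x - 1) / 2)) : ℝ)
              * Complex.exp (-(Complex.I * (ngamma γ n * Real.pi * (x - 1)))))) ≤ C / |(n : ℝ)| := by
  set K := Real.exp |Real.log (|γ - 1| / (γ + 1)) / 2|
  refine ⟨4 * K * C₀, by positivity, ⌈C₀⌉₊ + 1, fun n hn x hx => ?_⟩
  have hn : (⌈C₀⌉₊ : ℝ) + 1 ≤ |(n : ℝ)| := by rw [← Int.cast_abs]; exact_mod_cast hn
  have hn_pos : 0 < |(n : ℝ)| := by linarith [(⌈C₀⌉₊).cast_nonneg (α := ℝ)]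
  have hε : C₀ / |(n : ℝ)| ≤ 1 := (div_le_one hn_pos).2 (by linarith [Nat.le_ceil C₀])
  have hlμ := hasymp n (by rintro rfl; simp at hn_pos)
  have ht : |x - 1| ≤ 1 := abs_le.2 ⟨by linarith [hx.1], by linarith [hx.2]⟩
  have hx_cast : (x : ℂ) - 1 = ((x - 1 : ℝ) : ℂ) := by push_cast; ring
  have hbound :
      2 * (2 * Real.exp |(muSeq γ n).re| * (C₀ / |(n : ℝ)|)) = 4 * K * C₀ / |(n : ℝ)| := by
    rw [muSeq_re]; ring
  rw [← exp_muSeq_mul hγ hγ1, ← exp_neg_muSeq_mul hγ hγ1, ← two_cosh, ← two_sinh,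
    two_mul_deriv_efun_div (hl n), efun, ← mul_sub, ← mul_sub, norm_mul, norm_mul,
    RCLike.norm_ofNat, hx_cast, ← hbound]
  exact ⟨by gcongr; exact norm_cosh_mul_sub_cosh_mul_le ht hlμ hε,
    by gcongr; exact norm_sinh_mul_sub_sinh_mul_le ht hlμ hε⟩

/-- asymptotics of the eigenfunctions `fₙ(x) = sinh(λₙ(x-1))`
and their derivatives, uniformly for `x ∈ [0,1]`. -/
theorem stmt11 (β γ : ℝ) (hβ : 0 < β) (hγ : 0 < γ) (hγ1 : γ ≠ 1)
    (l : ℤ → ℂ) (hl : ∀ n, l n ≠ 0) (C₀ : ℝ) (hC₀ : 0 < C₀)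
    (hasymp : ∀ n : ℤ, n ≠ 0 → Norm.norm (l n - muSeq γ n) ≤ C₀ / |(n : ℝ)|) :
    ∃ (C : ℝ), 0 < C ∧ ∃ N : ℕ, ∀ n : ℤ, (N : ℤ) ≤ |n| → ∀ x ∈ Set.Icc (0:ℝ) 1,
      Norm.norm (2 * deriv (efun (l n)) x / l n
          - (((|γ - 1| / (γ + 1)) ^ ((x - 1) / 2) : ℝ)
              * Complex.exp (Complex.I * (ngamma γ n * Real.pi * (x - 1)))
            + ((|γ - 1| / (γ + 1)) ^ (-((x - 1) / 2)) : ℝ)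
              * Complex.exp (-(Complex.I * (ngamma γ n * Real.pi * (x - 1)))))) ≤ C / |(n : ℝ)| ∧
      Norm.norm (2 * efun (l n) x
          - (((|γ - 1| / (γ + 1)) ^ ((x - 1) / 2) : ℝ)
              * Complex.exp (Complex.I * (ngamma γ n * Real.pi * (x - 1)))
            - ((|γ - 1| / (γ + 1)) ^ (-((x - 1) / 2)) : ℝ)
              * Complex.exp (-(Complex.I * (ngamma γ n * Real.pi * (x - 1)))))) ≤ C / |(n : ℝ)| :=
  stmt11_general γ hγ hγ1 l hl C₀ hC₀ hasymp
end
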